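/- For a Dynkin quiver Q of type A_n (vertices 1,...,n, all arrows i → i+1), the isomorphism classes of indecomposable representations of Q over ℂ are in bijection with the positive roots of sl_{n+1}: for each pair i ≤ j, there is a unique (up to isomorphism) indecomposable representation of dimension vector α_i + α_{i+1} + ... + α_j, and every indecomposable representation is of this form. -/

import Mathlib

/-!
An interval module on `[i, j]` (a copy of `ℂ` at each vertex of `[i, j]`, identity maps between
them) is indecomposable: in a splitting `P ⊕ Q` of it, the supports of `P` and `Q` must meet
along an arrow inside `[i, j]`, where the arrow is an isomorphism `ℂ → ℂ` while the sum of the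
two restricted maps vanishes.

Conversely, let `M ≠ 0`, let `j` be the last vertex with `M_j ≠ 0` and `μ ≠ 0` a functional on
`M_j`. Pulling `μ` back along the arrows gives a cothread of functionals `φ_k` on `M_k`, `k ≤ j`;
let `i` be the first vertex with `φ_i ≠ 0` and pick `w` with `φ_i w = 1`. Pushing `w` forward
gives a thread of vectors `x_k`, `k ≥ i`, with `φ_k x_k = 1` on `[i, j]`. Then `c ↦ c • x` and
`v ↦ φ v` are morphisms from and to the interval module on `[i, j]` composing to the identity,
so it is a direct summand of `M`. Hence an indecomposable is isomorphic to the interval module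
of its own dimension vector.
-/

/-- A finite-dimensional complex representation of the linearly oriented type `A`
quiver with vertices `0,1,...,n` and arrows `i → i+1`. -/
structure ARep (n : ℕ) where
  V : Fin (n + 1) → Type
  [grp : ∀ i, AddCommGroup (V i)]
  [mod : ∀ i, Module ℂ (V i)]
  [fd : ∀ i, FiniteDimensional ℂ (V i)]
  f : ∀ i : Fin n, V i.castSucc →ₗ[ℂ] V i.succ

attribute [instance] ARep.grp ARep.mod ARep.fd

/-- Isomorphism of representations. -/
def ARepIso {n : ℕ} (M N : ARep n) : Prop :=
  ∃ e : ∀ i, M.V i ≃ₗ[ℂ] N.V i,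
    ∀ (i : Fin n) (x : M.V i.castSucc), e i.succ (M.f i x) = N.f i (e i.castSucc x)

/-- Direct sum of two representations. -/
def ARep.dsum {n : ℕ} (M N : ARep n) : ARep n where
  V := fun i => M.V i × N.V i
  f := fun i => (M.f i).prodMap (N.f i)

/-- Dimension vector of a representation. -/
noncomputable def ARep.dimVec {n : ℕ} (M : ARep n) : Fin (n + 1) → ℕ :=
  fun i => Module.finrank ℂ (M.V i)

/-- A representation is indecomposable if it is nonzero and any direct sum
decomposition has a zero summand. -/
def ARep.Indec {n : ℕ} (M : ARep n) : Prop :=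
  (∃ i, M.dimVec i ≠ 0) ∧
  ∀ P Q : ARep n, ARepIso M (P.dsum Q) →
    (∀ i, P.dimVec i = 0) ∨ (∀ i, Q.dimVec i = 0)

/-- The positive root `α_i + α_{i+1} + ⋯ + α_j` of `sl_{n+2}`, as a dimension
vector. -/
def intervalRoot (n : ℕ) (i j : Fin (n + 1)) : Fin (n + 1) → ℕ :=
  fun s => if i ≤ s ∧ s ≤ j then 1 else 0

def LinearMap.equivProdKerOfLeftInverse {R U V : Type*} [Ring R] [AddCommGroup U] [Module R U]
    [AddCommGroup V] [Module R V] (ι : U →ₗ[R] V) (p : V →ₗ[R] U) (h : ∀ u, p (ι u) = u) :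
    V ≃ₗ[R] U × LinearMap.ker p where
  toFun v := (p v, ⟨v - ι (p v), by simp [h]⟩)
  invFun w := ι w.1 + w.2
  map_add' v w := by ext <;> simp; abel
  map_smul' c v := by ext <;> simp [smul_sub]
  left_inv v := by simp
  right_inv w := by ext <;> simp [h, LinearMap.mem_ker.mp w.2.2]

theorem Fin.exists_apply_castSucc_ne_apply_succ {n : ℕ} {α : Type*} {g : Fin (n + 1) → α}
    {s t : Fin (n + 1)} (hst : s ≤ t) (h : g s ≠ g t) :
    ∃ a : Fin n, s ≤ a.castSucc ∧ a.succ ≤ t ∧ g a.castSucc ≠ g a.succ := by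
  by_contra! hconst
  have key (k : Fin (n + 1)) : s ≤ k → k ≤ t → g s = g k := by
    induction k using Fin.induction with
    | zero => exact fun hs _ => by rw [Fin.le_zero_iff.mp hs]
    | succ a ih =>
      intro hs ht
      rcases hs.eq_or_lt with rfl | hlt
      · rfl
      have hs' := Fin.le_castSucc_iff.mpr hlt
      exact (ih hs' (Fin.castSucc_lt_succ.le.trans ht)).trans (hconst a hs' ht)
  exact h (key t hst le_rfl)

def sumCoords (m : ℕ) : Module.Dual ℂ (Fin m → ℂ) where
  toFun c := ∑ t, c t
  map_add' _ _ := Finset.sum_add_distrib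
  map_smul' _ _ := Finset.mul_sum _ _ _ |>.symm

@[simp]
theorem sumCoords_apply {m : ℕ} (c : Fin m → ℂ) : sumCoords m c = ∑ t, c t :=
  rfl

section intervalRoot

variable {n : ℕ} {i j k : Fin (n + 1)}

theorem intervalRoot_le_one : intervalRoot n i j k ≤ 1 := by
  unfold intervalRoot
  split <;> simp

theorem intervalRoot_ne_zero_iff : intervalRoot n i j k ≠ 0 ↔ i ≤ k ∧ k ≤ j := by
  simp [intervalRoot]

theorem sum_const_intervalRoot (z : ℂ) :
    ∑ _ : Fin (intervalRoot n i j k), z = if i ≤ k ∧ k ≤ j then z else 0 := by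
  rw [Finset.sum_const, Finset.card_univ, Fintype.card_fin]
  by_cases h : i ≤ k ∧ k ≤ j <;> simp [intervalRoot, h]

theorem intervalRoot_of_mem (h : i ≤ k ∧ k ≤ j) : intervalRoot n i j k = 1 :=
  if_pos h

theorem mem_of_fin_intervalRoot (t : Fin (intervalRoot n i j k)) : i ≤ k ∧ k ≤ j :=
  intervalRoot_ne_zero_iff.mp (Nat.pos_iff_ne_zero.mp t.pos)

end intervalRoot

namespace ARepIso

variable {n : ℕ} {M N P : ARep n}

theorem symm (h : ARepIso M N) : ARepIso N M := by
  obtain ⟨e, he⟩ := h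
  refine ⟨fun k => (e k).symm, fun k y => ?_⟩
  rw [LinearEquiv.symm_apply_eq, he, LinearEquiv.apply_symm_apply]

theorem trans (h : ARepIso M N) (h' : ARepIso N P) : ARepIso M P := by
  obtain ⟨e, he⟩ := h
  obtain ⟨e', he'⟩ := h'
  exact ⟨fun k => (e k).trans (e' k), fun k x => by simp only [LinearEquiv.trans_apply, he, he']⟩

theorem dimVec_eq (h : ARepIso M N) : M.dimVec = N.dimVec := by
  obtain ⟨e, -⟩ := h
  exact funext fun k => (e k).finrank_eq

theorem f_eq_zero (h : ARepIso M N) {a : Fin n} (hN : N.f a = 0) : M.f a = 0 := by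
  obtain ⟨e, he⟩ := h
  ext x
  simpa [hN] using he a x
end ARepIso

namespace ARep

variable {n : ℕ}

theorem dimVec_dsum (M N : ARep n) (k : Fin (n + 1)) :
    (M.dsum N).dimVec k = M.dimVec k + N.dimVec k :=
  Module.finrank_prod

theorem iso_dsum_of_dimVec_eq_zero (M : ARep n) {Z : ARep n} (hZ : ∀ k, Z.dimVec k = 0) :
    ARepIso (M.dsum Z) M := by
  have (k : Fin (n + 1)) : Unique (Z.V k) :=
    have := Module.finrank_zero_iff.mp (hZ k)
    uniqueOfSubsingleton 0
  exact ⟨fun k => LinearEquiv.prodUnique, fun _ _ => rfl⟩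

theorem f_eq_zero_of_dimVec_eq_zero (M : ARep n) {a : Fin n}
    (h : M.dimVec a.castSucc = 0 ∨ M.dimVec a.succ = 0) : M.f a = 0 := by
  ext x
  rcases h with h | h
  · have := Module.finrank_zero_iff.mp h
    simp [Subsingleton.elim x 0]
  · have := Module.finrank_zero_iff.mp h
    exact Subsingleton.elim _ _

structure Hom (M N : ARep n) where
  app : ∀ k, M.V k →ₗ[ℂ] N.V k
  comm : ∀ (a : Fin n) (x : M.V a.castSucc), app a.succ (M.f a x) = N.f a (app a.castSucc x)

def Hom.ker {M N : ARep n} (p : M.Hom N) : ARep n where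
  V k := LinearMap.ker (p.app k)
  f a := (M.f a).restrict fun x hx => by
    rw [LinearMap.mem_ker] at hx ⊢
    rw [p.comm, hx, map_zero]

theorem iso_dsum_ker_of_retraction {I M : ARep n} (ι : I.Hom M) (p : M.Hom I)
    (hpι : ∀ k v, p.app k (ι.app k v) = v) : ARepIso M (I.dsum p.ker) := by
  refine ⟨fun k => (ι.app k).equivProdKerOfLeftInverse (p.app k) (hpι k), fun a x => ?_⟩
  refine Prod.ext (p.comm a x) (Subtype.ext ?_)
  show M.f a x - ι.app _ (p.app _ (M.f a x)) = M.f a (x - ι.app _ (p.app _ x))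
  rw [p.comm, ι.comm, map_sub]

/-- `ℂ^(d k)` at each vertex `k`, every arrow acting by the all-ones matrix; for
`d = intervalRoot n i j` this is the interval module on `[i, j]`. -/
abbrev allOnes (d : Fin (n + 1) → ℕ) : ARep n where
  V k := Fin (d k) → ℂ
  f _ := LinearMap.pi fun _ => sumCoords _

@[simp]
theorem allOnes_f_apply (d : Fin (n + 1) → ℕ) (a : Fin n) (c : Fin (d a.castSucc) → ℂ)
    (t : Fin (d a.succ)) : (allOnes d).f a c t = ∑ s, c s :=
  rfl

theorem dimVec_allOnes (d : Fin (n + 1) → ℕ) : (allOnes d).dimVec = d :=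
  funext fun _ => Module.finrank_fin_fun ℂ

theorem allOnes_f_ne_zero {d : Fin (n + 1) → ℕ} {a : Fin n} (h₀ : d a.castSucc ≠ 0)
    (h₁ : d a.succ ≠ 0) : (allOnes d).f a ≠ 0 := by
  intro h
  have h_ones := congr_fun (LinearMap.congr_fun h fun _ => 1) ⟨0, Nat.pos_of_ne_zero h₁⟩
  rw [allOnes_f_apply] at h_ones
  simp only [Finset.sum_const, Finset.card_univ, Fintype.card_fin, nsmul_eq_mul, mul_one]
    at h_ones
  exact h₀ (Nat.cast_eq_zero.mp h_ones)

section Interval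

variable {M : ARep n} {i j : Fin (n + 1)}

def Hom.ofThread (x : ∀ k, M.V k)
    (hx : ∀ a : Fin n, i ≤ a.castSucc → M.f a (x a.castSucc) = x a.succ)
    (hxj : ∀ k, j < k → x k = 0) : (allOnes (intervalRoot n i j)).Hom M where
  app k := (sumCoords _).smulRight (x k)
  comm a c := by
    simp only [LinearMap.smulRight_apply, sumCoords_apply, LinearMap.pi_apply,
      sum_const_intervalRoot, map_smul]
    by_cases ha : i ≤ a.castSucc ∧ a.castSucc ≤ j
    · rw [hx a ha.1]
      split_ifs with hs
      · rfl
      · have hj : j < a.succ :=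
          lt_of_not_ge fun h => hs ⟨ha.1.trans Fin.castSucc_lt_succ.le, h⟩
        rw [hxj _ hj, smul_zero, smul_zero]
    · have : IsEmpty (Fin (intervalRoot n i j a.castSucc)) :=
        ⟨fun t => ha (mem_of_fin_intervalRoot t)⟩
      simp

def Hom.ofCothread (φ : ∀ k, Module.Dual ℂ (M.V k))
    (hφ : ∀ a : Fin n, a.succ ≤ j → φ a.succ ∘ₗ M.f a = φ a.castSucc)
    (hφi : ∀ k, k < i → φ k = 0) : M.Hom (allOnes (intervalRoot n i j)) where
  app k := LinearMap.pi fun _ => φ k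
  comm a v := by
    funext t
    obtain ⟨-, hj⟩ := mem_of_fin_intervalRoot t
    simp only [LinearMap.pi_apply, sumCoords_apply, sum_const_intervalRoot]
    rw [← LinearMap.comp_apply, hφ a hj]
    split_ifs with ha
    · rfl
    · have hi : a.castSucc < i :=
        lt_of_not_ge fun h => ha ⟨h, Fin.castSucc_lt_succ.le.trans hj⟩
      rw [hφi _ hi, LinearMap.zero_apply]

theorem iso_allOnes_dsum_of_thread (x : ∀ k, M.V k) (φ : ∀ k, Module.Dual ℂ (M.V k))
    (hx : ∀ a : Fin n, i ≤ a.castSucc → M.f a (x a.castSucc) = x a.succ)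
    (hxj : ∀ k, j < k → x k = 0)
    (hφ : ∀ a : Fin n, a.succ ≤ j → φ a.succ ∘ₗ M.f a = φ a.castSucc)
    (hφi : ∀ k, k < i → φ k = 0) (hφx : ∀ k, i ≤ k → k ≤ j → φ k (x k) = 1) :
    ∃ K : ARep n, ARepIso M ((allOnes (intervalRoot n i j)).dsum K) := by
  refine ⟨_, iso_dsum_ker_of_retraction (Hom.ofThread x hx hxj) (Hom.ofCothread φ hφ hφi) ?_⟩
  intro k c
  funext t
  obtain ⟨hik, hkj⟩ := mem_of_fin_intervalRoot t
  have : Subsingleton (Fin (intervalRoot n i j k)) :=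
    Fin.subsingleton_iff_le_one.mpr intervalRoot_le_one
  simp [Hom.ofThread, Hom.ofCothread, hφx k hik hkj, Fintype.sum_subsingleton c t]

theorem indec_allOnes_intervalRoot (hij : i ≤ j) : (allOnes (intervalRoot n i j)).Indec := by
  refine ⟨⟨i, by simp [dimVec_allOnes, intervalRoot_of_mem ⟨le_rfl, hij⟩]⟩, fun P Q e => ?_⟩
  by_contra! hPQ
  obtain ⟨⟨s, hs⟩, ⟨t, ht⟩⟩ := hPQ
  have hsum (k) : P.dimVec k + Q.dimVec k = intervalRoot n i j k := by
    rw [← dimVec_dsum, ← e.dimVec_eq, dimVec_allOnes]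
  have mem (k) (hk : P.dimVec k + Q.dimVec k ≠ 0) : i ≤ k ∧ k ≤ j :=
    intervalRoot_ne_zero_iff.mp (hsum k ▸ hk)
  have hst : P.dimVec s ≠ P.dimVec t := by
    have := hsum t
    have := intervalRoot_le_one (n := n) (i := i) (j := j) (k := t)
    omega
  obtain ⟨a, hia, haj, ha⟩ : ∃ a : Fin n,
      i ≤ a.castSucc ∧ a.succ ≤ j ∧ P.dimVec a.castSucc ≠ P.dimVec a.succ := by
    rcases le_total s t with h | h
    · obtain ⟨a, h₁, h₂, h₃⟩ := Fin.exists_apply_castSucc_ne_apply_succ h hst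
      exact ⟨a, (mem s (by omega)).1.trans h₁, h₂.trans (mem t (by omega)).2, h₃⟩
    · obtain ⟨a, h₁, h₂, h₃⟩ := Fin.exists_apply_castSucc_ne_apply_succ h hst.symm
      exact ⟨a, (mem t (by omega)).1.trans h₁, h₂.trans (mem s (by omega)).2, h₃⟩
  have hroot₀ := intervalRoot_of_mem ⟨hia, Fin.castSucc_lt_succ.le.trans haj⟩
  have hroot₁ := intervalRoot_of_mem ⟨hia.trans Fin.castSucc_lt_succ.le, haj⟩
  have h₀ := hsum a.castSucc
  have h₁ := hsum a.succ
  refine allOnes_f_ne_zero (by rw [hroot₀]; exact one_ne_zero)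
    (by rw [hroot₁]; exact one_ne_zero) (e.f_eq_zero ?_)
  show (P.f a).prodMap (Q.f a) = 0
  rw [P.f_eq_zero_of_dimVec_eq_zero (by omega), Q.f_eq_zero_of_dimVec_eq_zero (by omega),
    LinearMap.prodMap_zero]

theorem exists_cothread (M : ARep n) {j : Fin (n + 1)} (hj : M.dimVec j ≠ 0) :
    ∃ i ≤ j, ∃ φ : ∀ k, Module.Dual ℂ (M.V k),
      (∀ a : Fin n, a.succ ≤ j → φ a.succ ∘ₗ M.f a = φ a.castSucc) ∧
      (∀ k, k < i → φ k = 0) ∧ φ i ≠ 0 := by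
  classical
  -- a functional at every vertex, so that `φ j = μ j` needs no transport along `k = j`
  have (k : Fin (n + 1)) : ∃ μ : Module.Dual ℂ (M.V k), M.dimVec k ≠ 0 → μ ≠ 0 := by
    by_cases hk : M.dimVec k = 0
    · exact ⟨0, fun h => absurd hk h⟩
    · have : Nontrivial (M.V k) := Module.finrank_pos_iff.mp (Nat.pos_of_ne_zero hk)
      obtain ⟨μ, hμ⟩ := exists_ne (0 : Module.Dual ℂ (M.V k))
      exact ⟨μ, fun _ => hμ⟩
  choose μ hμ using this
  let φ : ∀ k, Module.Dual ℂ (M.V k) := Fin.reverseInduction (μ (Fin.last n))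
    fun a φ_succ => if a.castSucc = j then μ a.castSucc else φ_succ ∘ₗ M.f a
  have hφj : φ j = μ j := by
    induction j using Fin.lastCases with
    | last => exact Fin.reverseInduction_last
    | cast a => exact (Fin.reverseInduction_castSucc a).trans (if_pos rfl)
  have hφ (a : Fin n) (ha : a.succ ≤ j) : φ a.succ ∘ₗ M.f a = φ a.castSucc := by
    simp only [φ]
    rw [Fin.reverseInduction_castSucc, if_neg (Fin.castSucc_lt_succ.trans_le ha).ne]
  have hφj' : φ j ≠ 0 := hφj ▸ hμ j hj
  obtain ⟨i, hi, hmin⟩ := wellFounded_lt.has_min {k | φ k ≠ 0} ⟨j, hφj'⟩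
  exact ⟨i, not_lt.mp (hmin j hφj'), φ, hφ, fun k hk => not_not.mp (hmin k · hk), hi⟩

theorem exists_thread (M : ARep n) {φ : ∀ k, Module.Dual ℂ (M.V k)}
    (hφ : ∀ a : Fin n, a.succ ≤ j → φ a.succ ∘ₗ M.f a = φ a.castSucc) (hi : φ i ≠ 0) :
    ∃ x : ∀ k, M.V k, (∀ a : Fin n, i ≤ a.castSucc → M.f a (x a.castSucc) = x a.succ) ∧
      ∀ k, i ≤ k → k ≤ j → φ k (x k) = 1 := by
  classical
  have (k : Fin (n + 1)) : ∃ w, φ k ≠ 0 → φ k w = 1 :=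
    if hk : φ k = 0 then ⟨0, fun h => absurd hk h⟩
    else (LinearMap.surjective_of_ne_zero hk 1).imp fun _ hw _ => hw
  choose w hw using this
  let x : ∀ k, M.V k :=
    Fin.induction (w 0) fun a x_a => if a.succ = i then w a.succ else M.f a x_a
  have hx (a : Fin n) (ha : i ≤ a.castSucc) : M.f a (x a.castSucc) = x a.succ :=
    ((Fin.induction_succ _ _ a).trans (if_neg (ha.trans_lt Fin.castSucc_lt_succ).ne')).symm
  refine ⟨x, hx, fun k => ?_⟩
  induction k using Fin.induction with
  | zero =>
    intro hi0 _
    rw [Fin.le_zero_iff.mp hi0] at hi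
    exact hw 0 hi
  | succ a ih =>
    intro hia haj
    rcases hia.eq_or_lt with rfl | hlt
    · rw [show x a.succ = w a.succ from (Fin.induction_succ _ _ a).trans (if_pos rfl)]
      exact hw _ hi
    · have hia' := Fin.le_castSucc_iff.mpr hlt
      rw [← hx a hia', ← LinearMap.comp_apply, hφ a haj]
      exact ih hia' (Fin.castSucc_lt_succ.le.trans haj)

theorem exists_iso_allOnes_dsum (M : ARep n) (hM : ∃ k, M.dimVec k ≠ 0) :
    ∃ i j, i ≤ j ∧ ∃ K : ARep n, ARepIso M ((allOnes (intervalRoot n i j)).dsum K) := by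
  obtain ⟨j, hj, hjmax⟩ := wellFounded_gt.has_min {k | M.dimVec k ≠ 0} hM
  obtain ⟨i, hij, φ, hφ, hφi, hi⟩ := M.exists_cothread hj
  obtain ⟨x, hx, hφx⟩ := M.exists_thread hφ hi
  have hxj (k) (hk : j < k) : x k = 0 :=
    have : Subsingleton (M.V k) := Module.finrank_zero_iff.mp (not_not.mp (hjmax k · hk))
    Subsingleton.elim _ _
  exact ⟨i, j, hij, iso_allOnes_dsum_of_thread x φ hx hxj hφ hφi hφx⟩

theorem Indec.exists_iso_allOnes (hM : M.Indec) :
    ∃ i j, i ≤ j ∧ ARepIso M (allOnes (intervalRoot n i j)) := by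
  obtain ⟨i, j, hij, K, e⟩ := M.exists_iso_allOnes_dsum hM.1
  refine ⟨i, j, hij, ?_⟩
  rcases hM.2 _ _ e with h | h
  · exact absurd (h i) (by simp [dimVec_allOnes, intervalRoot_of_mem ⟨le_rfl, hij⟩])
  · exact e.trans (iso_dsum_of_dimVec_eq_zero _ h)

theorem Indec.iso_allOnes_dimVec (hM : M.Indec) : ARepIso M (allOnes M.dimVec) := by
  obtain ⟨i, j, -, e⟩ := hM.exists_iso_allOnes
  rwa [e.dimVec_eq, dimVec_allOnes]

end Interval

end ARep

open ARep in
/-- Gabriel's theorem in type A: for the linearly oriented quiver of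
type `A_{n+1}`, for each pair `i ≤ j` there is a unique (up to isomorphism)
indecomposable representation of dimension vector `α_i + ⋯ + α_j`, and every
indecomposable representation is of this form; hence indecomposables are in
bijection with the positive roots of `sl_{n+2}`. -/
theorem gabriel_type_A (n : ℕ) :
    (∀ i j : Fin (n + 1), i ≤ j →
      (∃ M : ARep n, M.Indec ∧ M.dimVec = intervalRoot n i j) ∧
      (∀ M N : ARep n, M.Indec → N.Indec → M.dimVec = intervalRoot n i j →
        N.dimVec = intervalRoot n i j → ARepIso M N)) ∧
    (∀ M : ARep n, M.Indec → ∃ i j : Fin (n + 1), i ≤ j ∧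
      M.dimVec = intervalRoot n i j) := by
  refine ⟨fun i j hij => ⟨⟨_, indec_allOnes_intervalRoot hij, dimVec_allOnes _⟩, ?_⟩, ?_⟩
  · intro M N hM hN hMd hNd
    have eM := hM.iso_allOnes_dimVec
    have eN := hN.iso_allOnes_dimVec
    rw [hMd] at eM
    rw [hNd] at eN
    exact eM.trans eN.symm
  · intro M hM
    obtain ⟨i, j, hij, e⟩ := hM.exists_iso_allOnes
    exact ⟨i, j, hij, e.dimVec_eq.trans (dimVec_allOnes _)⟩
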